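/- Let 0 < α < β < π with α + β ≠ π, let x = e^{iα}, y = e^{iβ}, let a = e^{i(β+α)/2}/cos((β−α)/2), r_a = tan((β−α)/2), and let w = cos((β−α)/2)/cos((β+α)/2) ∈ ℝ. Let s and t be the two intersection points of the circles S¹(a,r_a) and S¹(w/2,|w|/2), and let u be the intersection of the vertical line {ζ : Re ζ = Re a} with the line through x and y. Then u, s, t are collinear; in fact every point m ∈ {s,t,u} satisfies m·(2a − w) = 1, where · denotes the real inner product on ℂ ≅ ℝ². -/

import Mathlib

open Complex ComplexConjugate

/-- Inverse hyperbolic cosine. -/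
noncomputable def arcosh (c : ℝ) : ℝ := Real.log (c + Real.sqrt (c ^ 2 - 1))

/-- Hyperbolic distance in the upper half plane `H² = {z : Im z > 0}`, determined by
`cosh (rhoH x y) = 1 + |x - y|^2 / (2 * Im x * Im y)`. -/
noncomputable def rhoH (x y : ℂ) : ℝ :=
  arcosh (1 + ‖x - y‖ ^ 2 / (2 * x.im * y.im))

/-- Hyperbolic distance in the unit disk `B² = {z : |z| < 1}`, determined by
`sinh (rhoB x y / 2) = |x - y| / (sqrt (1 - |x|^2) * sqrt (1 - |y|^2))`. -/
noncomputable def rhoB (x y : ℂ) : ℝ :=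
  2 * Real.arsinh (‖x - y‖ /
    (Real.sqrt (1 - ‖x‖ ^ 2) * Real.sqrt (1 - ‖y‖ ^ 2)))

/-- The Euclidean line through the points `p` and `q`, as a subset of `ℂ`. -/
def lineThrough (p q : ℂ) : Set ℂ := {z : ℂ | ∃ t : ℝ, z = p + t • (q - p)}

/-- The real inner product on `ℂ ≅ ℝ²`. -/
def dotR (p q : ℂ) : ℝ := p.re * q.re + p.im * q.im

/-! The circle `S¹(a, r_a)` is orthogonal to the unit circle, i.e. `‖a‖² - r_a² = 1`, and the
circle `S¹(w/2, |w|/2)` passes through `0`. Subtracting their equations shows that `s` and `t` lie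
on the radical axis `m · (2a - w) = ‖a‖² - r_a² = 1`. The chord `xy` of the unit circle is the
polar line `m · a = 1` of `a`, so `u · (2a - w) = 2 - w · Re a = 1`. A level set of a nonzero
linear functional on `ℝ²` is a line. -/

open scoped InnerProductSpace

section InnerProductSpace

variable {E : Type*} [NormedAddCommGroup E] [InnerProductSpace ℝ E]

theorem two_mul_inner_sub_of_norm_sub_eq {m a c : E} {r q : ℝ} (ha : ‖m - a‖ = r)
    (hc : ‖m - c‖ = q) : 2 * ⟪m, a - c⟫_ℝ = ‖a‖ ^ 2 - r ^ 2 - (‖c‖ ^ 2 - q ^ 2) := by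
  have hma := norm_sub_sq_real m a
  have hmc := norm_sub_sq_real m c
  rw [inner_sub_right]
  subst ha hc
  linarith

theorem collinear_of_forall_inner_eq (hE : Module.finrank ℝ E = 2) {v : E} (hv : v ≠ 0) {c : ℝ}
    {S : Set E} (hS : ∀ m ∈ S, ⟪m, v⟫_ℝ = c) : Collinear ℝ S := by
  have : Fact (Module.finrank ℝ E = 1 + 1) := ⟨hE⟩
  have := Module.finite_of_finrank_eq_succ hE
  have hspan : vectorSpan ℝ S ≤ (ℝ ∙ v)ᗮ := by
    rw [vectorSpan_def, Submodule.span_le]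
    rintro _ ⟨p, hp, q, hq, rfl⟩
    rw [SetLike.mem_coe, Submodule.mem_orthogonal_singleton_iff_inner_right, real_inner_comm]
    change ⟪p - q, v⟫_ℝ = 0
    rw [inner_sub_left, hS p hp, hS q hq, sub_self]
  rw [collinear_iff_finrank_le_one]
  calc Module.finrank ℝ (vectorSpan ℝ S) ≤ Module.finrank ℝ (ℝ ∙ v)ᗮ :=
        Submodule.finrank_mono hspan
    _ = 1 := Submodule.finrank_orthogonal_span_singleton hv

end InnerProductSpace

theorem dotR_eq_inner (p q : ℂ) : dotR p q = ⟪p, q⟫_ℝ := by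
  simp only [dotR, Complex.inner, mul_re, conj_re, conj_im]
  ring

theorem dotR_eq_of_mem_lineThrough {p q v z : ℂ} {c : ℝ} (hp : dotR p v = c)
    (hq : dotR q v = c) (hz : z ∈ lineThrough p q) : dotR z v = c := by
  obtain ⟨t, rfl⟩ := hz
  simp only [dotR_eq_inner] at hp hq ⊢
  rw [inner_add_left, real_inner_smul_left, inner_sub_left, hp, hq]
  ring

theorem dotR_two_mul_sub_of_mem_circles {m a : ℂ} {r w : ℝ} (ha : ‖m - a‖ = r)
    (hw : ‖m - (w : ℂ) / 2‖ = |w| / 2) : dotR m (2 * a - w) = ‖a‖ ^ 2 - r ^ 2 := by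
  have hw' : ‖(w : ℂ) / 2‖ = |w| / 2 := by simp
  have h := two_mul_inner_sub_of_norm_sub_eq ha hw
  rw [hw', sub_self, sub_zero] at h
  rw [dotR_eq_inner, ← h, ← real_inner_smul_right]
  congr 1
  rw [Complex.real_smul]
  push_cast
  ring

theorem dotR_exp_mul_I_div (θ φ c : ℝ) :
    dotR (exp (θ * I)) (exp (φ * I) / (c : ℂ)) = Real.cos (θ - φ) / c := by
  simp only [dotR, exp_ofReal_mul_I_re, exp_ofReal_mul_I_im, div_ofReal_re, div_ofReal_im,
    Real.cos_sub]
  ring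

theorem norm_exp_mul_I_div_cos_sq_sub_tan_sq (γ δ : ℝ) (hδ : Real.cos δ ≠ 0) :
    ‖exp (γ * I) / (Real.cos δ : ℂ)‖ ^ 2 - Real.tan δ ^ 2 = 1 := by
  rw [norm_div, norm_exp_ofReal_mul_I, norm_real, Real.norm_eq_abs, div_pow, sq_abs,
    Real.tan_eq_sin_div_cos]
  field_simp
  linarith [Real.sin_sq_add_cos_sq δ]

theorem u_s_t_collinear_general (α β : ℝ)
    (hα : 0 < α) (hαβ : α < β) (hβ : β < Real.pi) (hne : α + β ≠ Real.pi)
    (x y : ℂ) (hx : x = Complex.exp (α * Complex.I))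
    (hy : y = Complex.exp (β * Complex.I))
    (a : ℂ) (ra : ℝ)
    (ha : a = Complex.exp (((β + α) / 2 : ℝ) * Complex.I) / ((Real.cos ((β - α) / 2) : ℝ) : ℂ))
    (hra : ra = Real.tan ((β - α) / 2))
    (w : ℝ) (hw : w = Real.cos ((β - α) / 2) / Real.cos ((β + α) / 2))
    (s t : ℂ)
    (hs1 : ‖s - a‖ = ra) (hs2 : ‖s - (w : ℂ) / 2‖ = |w| / 2)
    (ht1 : ‖t - a‖ = ra) (ht2 : ‖t - (w : ℂ) / 2‖ = |w| / 2)
    (u : ℂ) (hu1 : u.re = a.re) (hu2 : u ∈ lineThrough x y) :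
    Collinear ℝ ({u, s, t} : Set ℂ) ∧
    ∀ m ∈ ({s, t, u} : Set ℂ), dotR m (2 * a - (w : ℂ)) = 1 := by
  have hδ : Real.cos ((β - α) / 2) ≠ 0 :=
    (Real.cos_pos_of_mem_Ioo ⟨by linarith, by linarith⟩).ne'
  have hγ : Real.cos ((β + α) / 2) ≠ 0 := fun h => hne <| by
    have hpi := Real.pi_pos
    have := Real.injOn_cos ⟨by linarith, by linarith⟩ ⟨by linarith, by linarith⟩
      (h.trans Real.cos_pi_div_two.symm)
    linarith
  have hcircles : ∀ m : ℂ, ‖m - a‖ = ra → ‖m - (w : ℂ) / 2‖ = |w| / 2 →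
      dotR m (2 * a - w) = 1 := fun m h₁ h₂ => by
    rw [dotR_two_mul_sub_of_mem_circles h₁ h₂, ha, hra]
    exact norm_exp_mul_I_div_cos_sq_sub_tan_sq _ _ hδ
  have hxa : dotR x a = 1 := by
    rw [hx, ha, dotR_exp_mul_I_div, show α - (β + α) / 2 = -((β - α) / 2) by ring, Real.cos_neg,
      div_self hδ]
  have hya : dotR y a = 1 := by
    rw [hy, ha, dotR_exp_mul_I_div, show β - (β + α) / 2 = (β - α) / 2 by ring, div_self hδ]
  have hwa : w * a.re = 1 := by
    rw [hw, ha, div_ofReal_re, exp_ofReal_mul_I_re]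
    field_simp
  have hu : dotR u (2 * a - w) = 1 :=
    calc dotR u (2 * a - w) = 2 * dotR u a - w * u.re := by
          simp only [dotR, sub_re, sub_im, mul_re, mul_im, ofReal_re, ofReal_im, re_ofNat, im_ofNat]
          ring
      _ = 1 := by rw [dotR_eq_of_mem_lineThrough hxa hya hu2, hu1, hwa]; norm_num
  have hall : ∀ m ∈ ({s, t, u} : Set ℂ), dotR m (2 * a - w) = 1 := by
    rintro m (rfl | rfl | rfl)
    exacts [hcircles _ hs1 hs2, hcircles _ ht1 ht2, hu]
  have hv : 2 * a - (w : ℂ) ≠ 0 := fun h => by simp [h, dotR] at hu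
  refine ⟨collinear_of_forall_inner_eq finrank_real_complex hv (c := 1) fun m hm => ?_, hall⟩
  rw [← dotR_eq_inner]
  apply hall
  rcases hm with rfl | rfl | rfl <;> simp

/-- Let `s, t` be the intersection points of the circles `S¹(a, r_a)` and
`S¹(w/2, |w|/2)`, and let `u` be the intersection of the vertical line `Re ζ = Re a`
with the line through `x` and `y`. Then `u, s, t` are collinear; in fact each
`m ∈ {s, t, u}` satisfies `m · (2a - w) = 1` (real inner product). -/
theorem u_s_t_collinear (α β : ℝ)
    (hα : 0 < α) (hαβ : α < β) (hβ : β < Real.pi) (hne : α + β ≠ Real.pi)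
    (x y : ℂ) (hx : x = Complex.exp (α * Complex.I))
    (hy : y = Complex.exp (β * Complex.I))
    (a : ℂ) (ra : ℝ)
    (ha : a = Complex.exp (((β + α) / 2 : ℝ) * Complex.I) / ((Real.cos ((β - α) / 2) : ℝ) : ℂ))
    (hra : ra = Real.tan ((β - α) / 2))
    (w : ℝ) (hw : w = Real.cos ((β - α) / 2) / Real.cos ((β + α) / 2))
    (s t : ℂ) (hst : s ≠ t)
    (hs1 : ‖s - a‖ = ra) (hs2 : ‖s - (w : ℂ) / 2‖ = |w| / 2)
    (ht1 : ‖t - a‖ = ra) (ht2 : ‖t - (w : ℂ) / 2‖ = |w| / 2)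
    (u : ℂ) (hu1 : u.re = a.re) (hu2 : u ∈ lineThrough x y) :
    Collinear ℝ ({u, s, t} : Set ℂ) ∧
    ∀ m ∈ ({s, t, u} : Set ℂ), dotR m (2 * a - (w : ℂ)) = 1 :=
  u_s_t_collinear_general α β hα hαβ hβ hne x y hx hy a ra ha hra w hw s t hs1 hs2 ht1 ht2 u hu1 hu2
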